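/- arXiv:1903.02216 — 2 statements merged into one kernel-verified Lean document; each statement's English description precedes it below -/
import Mathlib

section
/- For every x > 0, the derivative of the function x ↦ f(x)/x satisfies −5 ≤ −5/(N−1) < (f(x)/x)′ < 0; in particular x ↦ f(x)/x is strictly decreasing on (0,∞). -/
/-!
Write `J m x = ∫₀^π e^{x cos θ} sin^m θ dθ`, so that `f(x)/x = J (n+2) / ((n+1) J n)` for
`N = n + 2`. Integrating by parts gives `J m' = x J (m+2) / (m+1)` and the three-term recurrence
`(m+1)(m+3) J m = (m+2)(m+3) J (m+2) + x² J (m+4)`. Hence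
`(J (m+2) / J m)' = -x Ψ / ((m+1)(m+3) J m²)` with the Turán expression
`Ψ = (m+3) J (m+2)² - (m+1) J (m+4) J m`, and the recurrence turns the derivative of
`x^(m+4) Ψ` into `2(m+3) x^(m+3) J (m+2)² > 0`; as `x^(m+4) Ψ` vanishes at `0`, `Ψ > 0` for
`x > 0`. For the lower bound, `x Ψ < (m+3) x J (m+2)² ≤ (m+1)(m+3) J m²`, using `J (m+2) ≤ J m`
and, from `cos θ ≤ 1`, `x J (m+2) ≤ (m+1) J m`; so the derivative of `f(x)/x` even exceeds
`-1/(N-1)`.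
-/

open MeasureTheory Real

noncomputable section

/-- The ratio `I_{N/2}(x) / I_{N/2-1}(x)` of modified Bessel functions of the first kind,
expressed via the integral representation
`f(x) = (x/(N-1)) * (∫₀^π e^{x cos θ} sin^N θ dθ) / (∫₀^π e^{x cos θ} sin^{N-2} θ dθ)`. -/
def besselRatio (N : ℕ) (x : ℝ) : ℝ :=
  x / ((N : ℝ) - 1) *
      (∫ θ in (0:ℝ)..π, Real.exp (x * Real.cos θ) * Real.sin θ ^ N) /
    ∫ θ in (0:ℝ)..π, Real.exp (x * Real.cos θ) * Real.sin θ ^ (N - 2)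

open Set Filter

/-- Poisson's integral: `besselIntegral m x = √π Γ((m+1)/2) (2/x)^(m/2) I_{m/2}(x)`. -/
def besselIntegral (m : ℕ) (x : ℝ) : ℝ :=
  ∫ θ in (0:ℝ)..π, exp (x * cos θ) * sin θ ^ m

lemma besselRatio_add_two_div_self (m : ℕ) {x : ℝ} (hx : x ≠ 0) :
    besselRatio (m + 2) x / x =
      (m + 1 : ℝ)⁻¹ * (besselIntegral (m + 2) x / besselIntegral m x) := by
  change x / (((m + 2 : ℕ) : ℝ) - 1) * besselIntegral (m + 2) x / besselIntegral m x / x = _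
  rw [show ((m + 2 : ℕ) : ℝ) - 1 = m + 1 by push_cast; ring]
  field_simp

section

variable (m : ℕ) (x : ℝ)

lemma besselIntegral_pos : 0 < besselIntegral m x := by
  refine intervalIntegral.intervalIntegral_pos_of_pos_on
    (Continuous.intervalIntegrable (by fun_prop) _ _) (fun θ hθ => ?_) pi_pos
  have := sin_pos_of_pos_of_lt_pi hθ.1 hθ.2
  positivity

lemma besselIntegral_add_two_le : besselIntegral (m + 2) x ≤ besselIntegral m x := by
  refine intervalIntegral.integral_mono_on pi_pos.le
    (Continuous.intervalIntegrable (by fun_prop) _ _)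
    (Continuous.intervalIntegrable (by fun_prop) _ _) fun θ hθ => ?_
  have hsin := sin_nonneg_of_nonneg_of_le_pi hθ.1 hθ.2
  exact mul_le_mul_of_nonneg_left (pow_le_pow_of_le_one hsin (sin_le_one θ) (by omega))
    (exp_pos _).le

lemma add_one_mul_integral_cos_mul :
    (m + 1) * ∫ θ in (0:ℝ)..π, cos θ * (exp (x * cos θ) * sin θ ^ m) =
      x * besselIntegral (m + 2) x := by
  have hF : ∀ θ ∈ uIcc (0:ℝ) π, HasDerivAt (fun t => sin t ^ (m + 1) * exp (x * cos t))
      ((m + 1) * (cos θ * (exp (x * cos θ) * sin θ ^ m))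
        - x * (exp (x * cos θ) * sin θ ^ (m + 2))) θ := fun θ _ => by
    refine (((hasDerivAt_sin θ).fun_pow (m + 1)).fun_mul
      ((hasDerivAt_cos θ).const_mul x).exp).congr_deriv ?_
    simp only [Nat.add_sub_cancel, Nat.cast_add, Nat.cast_one]
    ring
  have := intervalIntegral.integral_eq_sub_of_hasDerivAt hF
    (Continuous.intervalIntegrable (by fun_prop) _ _)
  rw [intervalIntegral.integral_sub (Continuous.intervalIntegrable (by fun_prop) _ _)
    (Continuous.intervalIntegrable (by fun_prop) _ _), intervalIntegral.integral_const_mul,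
    intervalIntegral.integral_const_mul] at this
  simp only [sin_pi, sin_zero, ne_eq, Nat.add_eq_zero_iff, one_ne_zero, and_false,
    not_false_eq_true, zero_pow, zero_mul, sub_self] at this
  rw [besselIntegral]
  linarith

lemma mul_besselIntegral_add_two_le :
    x * besselIntegral (m + 2) x ≤ (m + 1) * besselIntegral m x := by
  rw [← add_one_mul_integral_cos_mul]
  gcongr
  refine intervalIntegral.integral_mono_on pi_pos.le
    (Continuous.intervalIntegrable (by fun_prop) _ _)
    (Continuous.intervalIntegrable (by fun_prop) _ _) fun θ hθ => ?_
  have := sin_nonneg_of_nonneg_of_le_pi hθ.1 hθ.2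
  exact mul_le_of_le_one_left (by positivity) (cos_le_one θ)

lemma besselIntegral_recurrence :
    (m + 1) * (m + 3) * besselIntegral m x =
      (m + 2) * (m + 3) * besselIntegral (m + 2) x + x ^ 2 * besselIntegral (m + 4) x := by
  have hF : ∀ θ ∈ uIcc (0:ℝ) π,
      HasDerivAt (fun t => cos t * sin t ^ (m + 1) * exp (x * cos t))
        ((m + 1) * (exp (x * cos θ) * sin θ ^ m)
          - (m + 2) * (exp (x * cos θ) * sin θ ^ (m + 2))
          - x * (cos θ * (exp (x * cos θ) * sin θ ^ (m + 2)))) θ := fun θ _ => by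
    refine (((hasDerivAt_cos θ).fun_mul ((hasDerivAt_sin θ).fun_pow (m + 1))).fun_mul
      ((hasDerivAt_cos θ).const_mul x).exp).congr_deriv ?_
    simp only [Nat.add_sub_cancel, Nat.cast_add, Nat.cast_one]
    linear_combination ((m + 1) * sin θ ^ m * exp (x * cos θ)) * sin_sq_add_cos_sq θ
  have := intervalIntegral.integral_eq_sub_of_hasDerivAt hF
    (Continuous.intervalIntegrable (by fun_prop) _ _)
  rw [intervalIntegral.integral_sub (Continuous.intervalIntegrable (by fun_prop) _ _)
      (Continuous.intervalIntegrable (by fun_prop) _ _),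
    intervalIntegral.integral_sub (Continuous.intervalIntegrable (by fun_prop) _ _)
      (Continuous.intervalIntegrable (by fun_prop) _ _),
    intervalIntegral.integral_const_mul, intervalIntegral.integral_const_mul,
    intervalIntegral.integral_const_mul] at this
  simp only [sin_pi, sin_zero, ne_eq, Nat.add_eq_zero_iff, one_ne_zero, and_false,
    not_false_eq_true, zero_pow, mul_zero, zero_mul, sub_self] at this
  have hcos := add_one_mul_integral_cos_mul (m + 2) x
  push_cast at hcos
  rw [besselIntegral, besselIntegral]
  linear_combination (m + 3) * this + x * hcos

lemma hasDerivAt_besselIntegral :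
    HasDerivAt (besselIntegral m) (x * besselIntegral (m + 2) x / (m + 1)) x := by
  have hbound : ∀ θ, ∀ y ∈ Metric.ball x 1,
      ‖cos θ * (exp (y * cos θ) * sin θ ^ m)‖ ≤ exp (|x| + 1) := fun θ y hy => by
    have hy : |y| ≤ |x| + 1 := by
      rw [Metric.mem_ball, dist_eq] at hy
      linarith [abs_sub_abs_le_abs_sub y x]
    have hexp : y * cos θ ≤ |x| + 1 :=
      calc y * cos θ ≤ |y| * |cos θ| := (le_abs_self _).trans (abs_mul _ _).le
        _ ≤ (|x| + 1) * 1 := by gcongr; exact abs_cos_le_one θ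
        _ = |x| + 1 := mul_one _
    calc ‖cos θ * (exp (y * cos θ) * sin θ ^ m)‖
        = |cos θ| * (exp (y * cos θ) * |sin θ| ^ m) := by
          rw [norm_mul, norm_mul, norm_pow, norm_eq_abs, norm_eq_abs, norm_eq_abs, abs_exp]
      _ ≤ 1 * (exp (|x| + 1) * 1) := by
          gcongr
          exacts [abs_cos_le_one θ, pow_le_one₀ (abs_nonneg _) (abs_sin_le_one θ)]
      _ = exp (|x| + 1) := by ring
  have hderiv := (intervalIntegral.hasDerivAt_integral_of_dominated_loc_of_deriv_le
    (μ := volume) (a := 0) (b := π)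
    (F := fun y θ => exp (y * cos θ) * sin θ ^ m)
    (F' := fun y θ => cos θ * (exp (y * cos θ) * sin θ ^ m))
    (Metric.ball_mem_nhds x one_pos)
    (Eventually.of_forall fun _ => (Continuous.aestronglyMeasurable (by fun_prop)))
    (Continuous.intervalIntegrable (by fun_prop) _ _)
    (Continuous.aestronglyMeasurable (by fun_prop))
    (ae_of_all _ fun θ _ => hbound θ) intervalIntegrable_const
    (ae_of_all _ fun θ _ y _ =>
      ((((hasDerivAt_id y).mul_const (cos θ)).exp).mul_const (sin θ ^ m)).congr_deriv
        (by simp only [id]; ring))).2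
  refine hderiv.congr_deriv ?_
  rw [eq_div_iff (by positivity), mul_comm, add_one_mul_integral_cos_mul]

def besselTuran (m : ℕ) (x : ℝ) : ℝ :=
  (m + 3) * besselIntegral (m + 2) x ^ 2 -
    (m + 1) * (besselIntegral (m + 4) x * besselIntegral m x)

lemma hasDerivAt_pow_mul_besselTuran :
    HasDerivAt (fun y => y ^ (m + 4) * besselTuran m y)
      (2 * (m + 3) * x ^ (m + 3) * besselIntegral (m + 2) x ^ 2) x := by
  have hΨ : HasDerivAt (besselTuran m) _ x :=
    (((hasDerivAt_besselIntegral (m + 2) x).pow 2).const_mul (m + 3 : ℝ)).sub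
      (((hasDerivAt_besselIntegral (m + 4) x).mul (hasDerivAt_besselIntegral m x)).const_mul
        (m + 1 : ℝ))
  refine ((hasDerivAt_pow (m + 4) x).mul hΨ).congr_deriv ?_
  have h0 := besselIntegral_recurrence m x
  have h2 := besselIntegral_recurrence (m + 2) x
  simp only [besselTuran, Nat.cast_add, Nat.cast_ofNat, show m + 4 - 1 = m + 3 by omega,
    show m + 2 + 2 = m + 4 by omega, show m + 2 + 4 = m + 6 by omega, Nat.add_one_sub_one]
    at h2 ⊢
  field_simp
  linear_combination (-(x ^ (m + 3) * besselIntegral (m + 2) x * (m + 3) * (m + 5))) * h0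
    + x ^ (m + 3) * (m + 1) * besselIntegral m x * (m + 3) * h2

lemma hasDerivAt_besselIntegral_div :
    HasDerivAt (fun y => besselIntegral (m + 2) y / besselIntegral m y)
      (-(x * besselTuran m x) / ((m + 1) * (m + 3) * besselIntegral m x ^ 2)) x := by
  refine ((hasDerivAt_besselIntegral (m + 2) x).div (hasDerivAt_besselIntegral m x)
    (besselIntegral_pos m x).ne').congr_deriv ?_
  have := besselIntegral_pos m x
  simp only [besselTuran, Nat.cast_add, Nat.cast_ofNat, show m + 2 + 2 = m + 4 by omega]
  field_simp
  ring

variable {x}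

lemma besselTuran_pos (hx : 0 < x) : 0 < besselTuran m x := by
  have hmono : StrictMonoOn (fun y => y ^ (m + 4) * besselTuran m y) (Ici 0) := by
    refine strictMonoOn_of_deriv_pos (convex_Ici 0)
      (fun y _ => (hasDerivAt_pow_mul_besselTuran m y).continuousAt.continuousWithinAt)
      fun y hy => ?_
    rw [interior_Ici] at hy
    rw [(hasDerivAt_pow_mul_besselTuran m y).deriv]
    have := besselIntegral_pos (m + 2) y
    have : 0 < y := hy
    positivity
  have h := hmono self_mem_Ici hx.le hx
  dsimp only at h
  rw [zero_pow (by omega), zero_mul] at h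
  exact pos_of_mul_pos_right h (by positivity)

lemma mul_besselTuran_lt (hx : 0 < x) :
    x * besselTuran m x < (m + 1) * (m + 3) * besselIntegral m x ^ 2 := by
  have ha := besselIntegral_pos (m + 2) x
  have hb := besselIntegral_pos m x
  have hc := besselIntegral_pos (m + 4) x
  have hab := besselIntegral_add_two_le m x
  have hxab := mul_besselIntegral_add_two_le m x
  calc x * besselTuran m x
      < (m + 3) * besselIntegral (m + 2) x * (x * besselIntegral (m + 2) x) := by
        unfold besselTuran; nlinarith [mul_pos hx (mul_pos hc hb)]
    _ ≤ (m + 3) * besselIntegral m x * ((m + 1) * besselIntegral m x) := by gcongr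
    _ = (m + 1) * (m + 3) * besselIntegral m x ^ 2 := by ring

lemma deriv_besselIntegral_div_mem_Ioo (hx : 0 < x) :
    deriv (fun y => besselIntegral (m + 2) y / besselIntegral m y) x ∈ Ioo (-1) 0 := by
  have hden : 0 < (m + 1) * (m + 3) * besselIntegral m x ^ 2 := by
    have := besselIntegral_pos m x
    positivity
  rw [(hasDerivAt_besselIntegral_div m x).deriv, neg_div, mem_Ioo, neg_lt_neg_iff, neg_lt_zero]
  exact ⟨(div_lt_one hden).2 (mul_besselTuran_lt m hx),
    div_pos (mul_pos hx (besselTuran_pos m hx)) hden⟩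

end

/-- For every `x > 0`, `-5 ≤ -5/(N-1) < (f(x)/x)' < 0`; in particular `x ↦ f(x)/x` is
strictly decreasing on `(0, ∞)`. -/
theorem besselRatio_div_deriv_bounds (N : ℕ) (hN : 2 ≤ N) :
    (∀ x : ℝ, 0 < x →
      (-5 : ℝ) ≤ -5 / ((N : ℝ) - 1) ∧
        -5 / ((N : ℝ) - 1) < deriv (fun y => besselRatio N y / y) x ∧
        deriv (fun y => besselRatio N y / y) x < 0) ∧
      StrictAntiOn (fun y => besselRatio N y / y) (Set.Ioi 0) := by
  obtain ⟨n, rfl⟩ : ∃ n, N = n + 2 := ⟨N - 2, by omega⟩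
  set r := fun y => besselIntegral (n + 2) y / besselIntegral n y
  have hderiv : ∀ x, 0 < x →
      HasDerivAt (fun y => besselRatio (n + 2) y / y) ((n + 1 : ℝ)⁻¹ * deriv r x) x :=
    fun x hx => ((hasDerivAt_besselIntegral_div n x).differentiableAt.hasDerivAt.const_mul
      _).congr_of_eventuallyEq <|
        (eventually_ne_nhds hx.ne').mono fun y hy => besselRatio_add_two_div_self n hy
  have hN1 : ((n + 2 : ℕ) : ℝ) - 1 = n + 1 := by push_cast; ring
  have hbounds : ∀ x, 0 < x →
      -5 / ((n + 2 : ℕ) - 1 : ℝ) < (n + 1 : ℝ)⁻¹ * deriv r x ∧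
        (n + 1 : ℝ)⁻¹ * deriv r x < 0 := by
    intro x hx
    obtain ⟨hlo, hhi⟩ := deriv_besselIntegral_div_mem_Ioo n hx
    rw [hN1, div_eq_inv_mul]
    exact ⟨by gcongr; linarith, mul_neg_of_pos_of_neg (by positivity) hhi⟩
  refine ⟨fun x hx => ⟨?_, (hderiv x hx).deriv ▸ hbounds x hx⟩, ?_⟩
  · rw [hN1, le_div_iff₀ (by positivity)]
    linarith [n.cast_nonneg (α := ℝ)]
  · refine strictAntiOn_of_deriv_neg (convex_Ioi 0)
      (fun x hx => (hderiv x hx).continuousAt.continuousWithinAt) fun x hx => ?_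
    rw [interior_Ioi] at hx
    exact (hderiv x hx).deriv ▸ (hbounds x hx).2

end
end

section
/- For every x > 0, one has (1/x)(1 − N f(x)/x) > −4/(N−1). -/
/-!
Write `B`, `A`, `C` for the integrals over `[0, π]` of `e^{x cos θ} sin^m θ`,
`e^{x cos θ} sin^{m+2} θ` and `e^{x cos θ} sin^{m+2} θ cos θ`, with `N = m + 2`, so that
`f(x) = x A / ((m + 1) B)`. Integrating the derivative of `e^{x cos θ} sin^{m+1} θ cos θ`, which
vanishes at both ends, gives `(m + 1) B = (m + 2) A + x C`; hence the left-hand side equals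
`C / ((m + 1) B)`. Since `sin² θ cos θ ≥ -1`, we get `C ≥ -B`, so the left-hand side is even
at least `-1 / (N - 1)`.
-/

open MeasureTheory Real

noncomputable section

theorem hasDerivAt_exp_mul_cos_mul_sin_pow_succ_mul_cos (x : ℝ) (m : ℕ) (θ : ℝ) :
    HasDerivAt (fun θ => exp (x * cos θ) * sin θ ^ (m + 1) * cos θ)
      ((m + 1) * (exp (x * cos θ) * sin θ ^ m) - (m + 2) * (exp (x * cos θ) * sin θ ^ (m + 2))
        - x * (exp (x * cos θ) * sin θ ^ (m + 2) * cos θ)) θ := by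
  refine ((((hasDerivAt_cos θ).const_mul x).exp.mul ((hasDerivAt_sin θ).pow (m + 1))).mul
    (hasDerivAt_cos θ)).congr_deriv ?_
  have hpyth := sin_sq_add_cos_sq θ
  push_cast
  simp only [Pi.mul_apply, Pi.pow_apply]
  linear_combination ((m + 1 : ℝ) * Real.exp (x * cos θ) * sin θ ^ m) * hpyth

theorem integral_exp_mul_cos_mul_sin_pow_recurrence (x : ℝ) (m : ℕ) :
    (m + 1) * ∫ θ in (0:ℝ)..π, exp (x * cos θ) * sin θ ^ m
      = (m + 2) * (∫ θ in (0:ℝ)..π, exp (x * cos θ) * sin θ ^ (m + 2))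
        + x * ∫ θ in (0:ℝ)..π, exp (x * cos θ) * sin θ ^ (m + 2) * cos θ := by
  have hFTC := intervalIntegral.integral_eq_sub_of_hasDerivAt
    (fun θ _ => hasDerivAt_exp_mul_cos_mul_sin_pow_succ_mul_cos x m θ)
    (Continuous.intervalIntegrable (by fun_prop) 0 π)
  have hint : ∀ f : ℝ → ℝ, Continuous f → IntervalIntegrable f volume 0 π :=
    fun f hf => hf.intervalIntegrable 0 π
  rw [intervalIntegral.integral_sub (hint _ (by fun_prop)) (hint _ (by fun_prop)),
    intervalIntegral.integral_sub (hint _ (by fun_prop)) (hint _ (by fun_prop))] at hFTC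
  simp only [intervalIntegral.integral_const_mul, sin_zero, sin_pi, zero_pow m.succ_ne_zero,
    mul_zero, zero_mul, sub_self] at hFTC
  linarith

theorem neg_integral_le_integral_exp_mul_cos_mul_sin_pow_mul_cos (x : ℝ) (m : ℕ) :
    -∫ θ in (0:ℝ)..π, exp (x * cos θ) * sin θ ^ m
      ≤ ∫ θ in (0:ℝ)..π, exp (x * cos θ) * sin θ ^ (m + 2) * cos θ := by
  rw [← intervalIntegral.integral_neg]
  refine intervalIntegral.integral_mono_on pi_pos.le (Continuous.intervalIntegrable (by fun_prop) _ _)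
    (Continuous.intervalIntegrable (by fun_prop) _ _) fun θ hθ => ?_
  have hs : 0 ≤ sin θ ^ m := pow_nonneg (sin_nonneg_of_nonneg_of_le_pi hθ.1 hθ.2) m
  have hsc : -1 ≤ sin θ ^ 2 * cos θ := by
    linarith [mul_le_mul_of_nonneg_left (neg_one_le_cos θ) (sq_nonneg (sin θ)), sin_sq_le_one θ]
  linear_combination
    mul_nonneg (mul_nonneg (exp_pos (x * cos θ)).le hs) (neg_le_iff_add_nonneg.mp hsc)

theorem integral_exp_mul_cos_mul_sin_pow_pos (x : ℝ) (m : ℕ) :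
    0 < ∫ θ in (0:ℝ)..π, exp (x * cos θ) * sin θ ^ m :=
  intervalIntegral.intervalIntegral_pos_of_pos_on (Continuous.intervalIntegrable (by fun_prop) _ _)
    (fun θ hθ => mul_pos (exp_pos _) (pow_pos (sin_pos_of_pos_of_lt_pi hθ.1 hθ.2) m)) pi_pos

/-- For every `x > 0`, `(1/x)(1 - N f(x)/x) > -4/(N-1)`. -/
theorem besselRatio_nasell_bound (N : ℕ) (hN : 2 ≤ N) (x : ℝ) (hx : 0 < x) :
    1 / x * (1 - (N : ℝ) * besselRatio N x / x) > -4 / ((N : ℝ) - 1) := by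
  obtain ⟨m, rfl⟩ : ∃ m, N = m + 2 := ⟨N - 2, by omega⟩
  have hrec := integral_exp_mul_cos_mul_sin_pow_recurrence x m
  have hlower := neg_integral_le_integral_exp_mul_cos_mul_sin_pow_mul_cos x m
  have hpos := integral_exp_mul_cos_mul_sin_pow_pos x m
  set B := ∫ θ in (0:ℝ)..π, exp (x * cos θ) * sin θ ^ m
  set A := ∫ θ in (0:ℝ)..π, exp (x * cos θ) * sin θ ^ (m + 2)
  set C := ∫ θ in (0:ℝ)..π, exp (x * cos θ) * sin θ ^ (m + 2) * cos θ
  have hN1 : ((m + 2 : ℕ) : ℝ) - 1 = m + 1 := by push_cast; ring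
  have hratio : besselRatio (m + 2) x = x / (m + 1) * A / B := by
    rw [besselRatio, Nat.add_sub_cancel, hN1]
  have hlhs :
      1 / x * (1 - ((m + 2 : ℕ) : ℝ) * besselRatio (m + 2) x / x) = C / ((m + 1) * B) := by
    rw [hratio]
    field_simp
    push_cast
    linear_combination hrec
  rw [hlhs, gt_iff_lt, hN1, div_lt_div_iff₀ (by positivity) (by positivity)]
  nlinarith [mul_le_mul_of_nonneg_left hlower (by positivity : (0 : ℝ) ≤ m + 1)]

end
end
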